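/- Structure theorem: the solution set of the system equals the union over selections e (choosing for each equation i an index e(i) with A i (e i) ≥ b i) of the boxes [X(e), X̄], where X(e)_j = max over i with e(i) = j of the minimal single-variable solution, and X̄ is the maximum solution. -/
import Mathlib

noncomputable def aczelAlsinaStar (lam a x : ℝ) : ℝ :=
  if a = 0 ∨ x = 0 then 0
  else Real.exp (-(((-Real.log a) ^ lam + (-Real.log x) ^ lam) ^ (1/lam)))

/-- Maximum solution of the i-th single equation, componentwise. -/
noncomputable def maxSol (lam b a : ℝ) : ℝ :=
  if b < a then
    (if b = 0 then 0
     else Real.exp (-(((-Real.log b) ^ lam - (-Real.log a) ^ lam) ^ (1/lam))))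
  else 1

/-- Minimal single-variable solution value `v i j`. -/
noncomputable def minVal (lam b a : ℝ) : ℝ :=
  if b = 0 then 0
  else Real.exp (-(((-Real.log b) ^ lam - (-Real.log a) ^ lam) ^ (1/lam)))

/-- The minimal candidate solution `X(e)` associated with a selection `e`. -/
noncomputable def Xmin {m n : ℕ} (lam : ℝ) (A : Fin m → Fin n → ℝ) (b : Fin m → ℝ)
    (e : Fin m → Fin n) (j : Fin n) : ℝ :=
  if h : (Finset.univ.filter (fun i => e i = j)).Nonempty then
    (Finset.univ.filter (fun i => e i = j)).sup' h (fun i => minVal lam (b i) (A i j))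
  else 0

private lemma rpow_lam_inv {lam : ℝ} (hlam : 0 < lam) {c : ℝ} (hc : 0 ≤ c) :
    (c ^ lam) ^ (1/lam) = c := by
  rw [← Real.rpow_mul hc, mul_one_div_cancel hlam.ne', Real.rpow_one]

private lemma rpow_inv_lam {lam : ℝ} (hlam : 0 < lam) {c : ℝ} (hc : 0 ≤ c) :
    (c ^ (1/lam)) ^ lam = c := by
  rw [← Real.rpow_mul hc, one_div_mul_cancel hlam.ne', Real.rpow_one]

private lemma aa_nonneg (lam a x : ℝ) : 0 ≤ aczelAlsinaStar lam a x := by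
  unfold aczelAlsinaStar
  split
  · exact le_refl 0
  · exact (Real.exp_pos _).le

private lemma minVal_nonneg (lam b a : ℝ) : 0 ≤ minVal lam b a := by
  unfold minVal
  split
  · exact le_refl 0
  · exact (Real.exp_pos _).le

private lemma neglog_nonneg {a : ℝ} (h0 : 0 ≤ a) (h1 : a ≤ 1) : 0 ≤ -Real.log a :=
  neg_nonneg.2 (Real.log_nonpos h0 h1)

private lemma D_nonneg {lam b a : ℝ} (hlam : 0 < lam) (hb0 : 0 < b) (hba : b ≤ a)
    (ha1 : a ≤ 1) : 0 ≤ (-Real.log b) ^ lam - (-Real.log a) ^ lam :=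
  sub_nonneg.2 (Real.rpow_le_rpow (neglog_nonneg (hb0.trans_le hba).le ha1)
    (neg_le_neg (Real.log_le_log hb0 hba)) hlam.le)

private lemma maxSol_le_one {lam b a : ℝ} (hlam : 0 < lam) (hb0 : 0 ≤ b) (hb1 : b ≤ 1)
    (ha1 : a ≤ 1) : maxSol lam b a ≤ 1 := by
  unfold maxSol
  split_ifs with hba hbz
  · exact zero_le_one
  · have hbpos : 0 < b := lt_of_le_of_ne hb0 (Ne.symm hbz)
    have hD := D_nonneg hlam hbpos hba.le ha1
    exact Real.exp_le_one_iff.2 (neg_nonpos.2 (Real.rpow_nonneg hD _))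
  · exact le_refl 1

/-- `φ lam a x ≤ a` for `a, x ∈ [0,1]`. -/
private lemma aa_le_left {lam a x : ℝ} (hlam : 0 < lam) (ha : a ∈ Set.Icc (0:ℝ) 1)
    (hx : x ∈ Set.Icc (0:ℝ) 1) : aczelAlsinaStar lam a x ≤ a := by
  unfold aczelAlsinaStar
  split_ifs with h
  · exact ha.1
  · push_neg at h
    have ha0 : 0 < a := lt_of_le_of_ne ha.1 (Ne.symm h.1)
    have hLa := neglog_nonneg ha.1 ha.2
    have hLx := neglog_nonneg hx.1 hx.2
    have h1 : (-Real.log a) ^ lam ≤ (-Real.log a) ^ lam + (-Real.log x) ^ lam :=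
      le_add_of_nonneg_right (Real.rpow_nonneg hLx lam)
    have h2 : -Real.log a ≤ ((-Real.log a) ^ lam + (-Real.log x) ^ lam) ^ (1/lam) := by
      calc -Real.log a = ((-Real.log a) ^ lam) ^ (1/lam) := (rpow_lam_inv hlam hLa).symm
        _ ≤ _ := Real.rpow_le_rpow (Real.rpow_nonneg hLa lam) h1 (one_div_nonneg.2 hlam.le)
    calc Real.exp (-(((-Real.log a) ^ lam + (-Real.log x) ^ lam) ^ (1/lam)))
        ≤ Real.exp (Real.log a) := Real.exp_le_exp.2 (by linarith)
      _ = a := Real.exp_log ha0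

/-- lower bound lemma: if `minVal ≤ x` then `b ≤ φ lam a x`. -/
private lemma le_aa_of_minVal_le {lam a b x : ℝ} (hlam : 0 < lam) (hb0 : 0 ≤ b)
    (hba : b ≤ a) (ha1 : a ≤ 1) (hx1 : x ≤ 1) (hx0 : 0 ≤ x)
    (hle : minVal lam b a ≤ x) : b ≤ aczelAlsinaStar lam a x := by
  rcases eq_or_lt_of_le hb0 with hb | hb
  · exact hb ▸ aa_nonneg lam a x
  · unfold minVal at hle
    rw [if_neg hb.ne'] at hle
    have hxpos : 0 < x := lt_of_lt_of_le (Real.exp_pos _) hle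
    have hapos : 0 < a := hb.trans_le hba
    unfold aczelAlsinaStar
    rw [if_neg (by push_neg; exact ⟨hapos.ne', hxpos.ne'⟩)]
    have hLa : 0 ≤ -Real.log a := neglog_nonneg hapos.le ha1
    have hLb : 0 ≤ -Real.log b := neglog_nonneg hb.le (hba.trans ha1)
    have hLx : 0 ≤ -Real.log x := neglog_nonneg hx0 hx1
    have hD : 0 ≤ (-Real.log b) ^ lam - (-Real.log a) ^ lam := D_nonneg hlam hb hba ha1
    have h1 : -Real.log x ≤ ((-Real.log b) ^ lam - (-Real.log a) ^ lam) ^ (1/lam) := by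
      have := Real.log_le_log (Real.exp_pos _) hle
      rw [Real.log_exp] at this
      linarith
    have h2 : (-Real.log x) ^ lam ≤ (-Real.log b) ^ lam - (-Real.log a) ^ lam := by
      calc (-Real.log x) ^ lam
          ≤ (((-Real.log b) ^ lam - (-Real.log a) ^ lam) ^ (1/lam)) ^ lam :=
            Real.rpow_le_rpow hLx h1 hlam.le
        _ = _ := rpow_inv_lam hlam hD
    have h3 : ((-Real.log a) ^ lam + (-Real.log x) ^ lam) ^ (1/lam) ≤ -Real.log b := by
      calc ((-Real.log a) ^ lam + (-Real.log x) ^ lam) ^ (1/lam)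
          ≤ ((-Real.log b) ^ lam) ^ (1/lam) :=
            Real.rpow_le_rpow
              (add_nonneg (Real.rpow_nonneg hLa lam) (Real.rpow_nonneg hLx lam))
              (by linarith) (one_div_nonneg.2 hlam.le)
        _ = -Real.log b := rpow_lam_inv hlam hLb
    calc b = Real.exp (Real.log b) := (Real.exp_log hb).symm
      _ ≤ _ := Real.exp_le_exp.2 (by linarith)

/-- forward: if `φ lam a x ≤ b` then `x ≤ maxSol lam b a`. -/
private lemma le_maxSol_of_aa_le {lam a b x : ℝ} (hlam : 0 < lam)
    (ha : a ∈ Set.Icc (0:ℝ) 1) (hb : b ∈ Set.Icc (0:ℝ) 1) (hx0 : 0 ≤ x) (hx1 : x ≤ 1)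
    (hle : aczelAlsinaStar lam a x ≤ b) : x ≤ maxSol lam b a := by
  unfold maxSol
  split_ifs with hba hbz
  · -- b < a, b = 0
    subst hbz
    by_contra hxc
    push_neg at hxc
    have hphi : 0 < aczelAlsinaStar lam a x := by
      unfold aczelAlsinaStar
      rw [if_neg (by push_neg; exact ⟨(lt_of_le_of_lt (le_refl 0) hba).ne', hxc.ne'⟩)]
      exact Real.exp_pos _
    linarith
  · -- b < a, b ≠ 0
    rcases eq_or_lt_of_le hx0 with hx | hxpos
    · exact hx ▸ (Real.exp_pos _).le
    · have hbpos : 0 < b := lt_of_le_of_ne hb.1 (Ne.symm hbz)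
      have hapos : 0 < a := hbpos.trans hba
      unfold aczelAlsinaStar at hle
      rw [if_neg (by push_neg; exact ⟨hapos.ne', hxpos.ne'⟩)] at hle
      have hLa : 0 ≤ -Real.log a := neglog_nonneg hapos.le ha.2
      have hLb : 0 ≤ -Real.log b := neglog_nonneg hbpos.le hb.2
      have hLx : 0 ≤ -Real.log x := neglog_nonneg hx0 hx1
      have hD : 0 ≤ (-Real.log b) ^ lam - (-Real.log a) ^ lam :=
        D_nonneg hlam hbpos hba.le ha.2
      have hS : 0 ≤ (-Real.log a) ^ lam + (-Real.log x) ^ lam :=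
        add_nonneg (Real.rpow_nonneg hLa lam) (Real.rpow_nonneg hLx lam)
      have h1 : -Real.log b ≤ ((-Real.log a) ^ lam + (-Real.log x) ^ lam) ^ (1/lam) := by
        have := Real.log_le_log (Real.exp_pos _) hle
        rw [Real.log_exp] at this
        linarith
      have h2 : (-Real.log b) ^ lam ≤ (-Real.log a) ^ lam + (-Real.log x) ^ lam := by
        calc (-Real.log b) ^ lam
            ≤ (((-Real.log a) ^ lam + (-Real.log x) ^ lam) ^ (1/lam)) ^ lam :=
              Real.rpow_le_rpow hLb h1 hlam.le
          _ = _ := rpow_inv_lam hlam hS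
      have h3 : ((-Real.log b) ^ lam - (-Real.log a) ^ lam) ^ (1/lam) ≤ -Real.log x := by
        calc ((-Real.log b) ^ lam - (-Real.log a) ^ lam) ^ (1/lam)
            ≤ ((-Real.log x) ^ lam) ^ (1/lam) :=
              Real.rpow_le_rpow hD (by linarith) (one_div_nonneg.2 hlam.le)
          _ = -Real.log x := rpow_lam_inv hlam hLx
      calc x = Real.exp (Real.log x) := (Real.exp_log hxpos).symm
        _ ≤ _ := Real.exp_le_exp.2 (by linarith)
  · exact hx1

/-- forward: if `φ lam a x = b` then `minVal lam b a ≤ x`. -/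
private lemma minVal_le_of_aa_eq {lam a b x : ℝ} (hlam : 0 < lam) (ha1 : a ≤ 1) (ha0 : 0 ≤ a)
    (hx0 : 0 ≤ x) (hx1 : x ≤ 1) (hb : 0 ≤ b) (heq : aczelAlsinaStar lam a x = b) :
    minVal lam b a ≤ x := by
  unfold minVal
  split_ifs with hbz
  · exact hx0
  unfold aczelAlsinaStar at heq
  split_ifs at heq with h
  · exact absurd heq.symm hbz
  push_neg at h
  have hapos : 0 < a := lt_of_le_of_ne ha0 (Ne.symm h.1)
  have hxpos : 0 < x := lt_of_le_of_ne hx0 (Ne.symm h.2)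
  have hLa : 0 ≤ -Real.log a := neglog_nonneg ha0 ha1
  have hLx : 0 ≤ -Real.log x := neglog_nonneg hx0 hx1
  have hbpos : 0 < b := lt_of_le_of_ne hb (Ne.symm hbz)
  have hS : 0 ≤ (-Real.log a) ^ lam + (-Real.log x) ^ lam :=
    add_nonneg (Real.rpow_nonneg hLa lam) (Real.rpow_nonneg hLx lam)
  have h1 : ((-Real.log a) ^ lam + (-Real.log x) ^ lam) ^ (1/lam) = -Real.log b := by
    have := congrArg Real.log heq
    rw [Real.log_exp] at this
    linarith
  have h2 : (-Real.log a) ^ lam + (-Real.log x) ^ lam = (-Real.log b) ^ lam := by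
    rw [← h1, rpow_inv_lam hlam hS]
  have h3 : (-Real.log x) ^ lam = (-Real.log b) ^ lam - (-Real.log a) ^ lam := by linarith
  have h4 : -Real.log x = ((-Real.log b) ^ lam - (-Real.log a) ^ lam) ^ (1/lam) := by
    rw [← h3, rpow_lam_inv hlam hLx]
  rw [← h4]
  have hxe : Real.exp (-(-Real.log x)) = x := by rw [neg_neg]; exact Real.exp_log hxpos
  exact hxe.le

/-- backward: if `x ≤ maxSol lam b a` then `φ lam a x ≤ b`. -/
private lemma aa_le_of_le_maxSol {lam a b x : ℝ} (hlam : 0 < lam)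
    (ha : a ∈ Set.Icc (0:ℝ) 1) (hb : b ∈ Set.Icc (0:ℝ) 1) (hx0 : 0 ≤ x) (hx1 : x ≤ 1)
    (hle : x ≤ maxSol lam b a) : aczelAlsinaStar lam a x ≤ b := by
  unfold aczelAlsinaStar
  split_ifs with h
  · exact hb.1
  push_neg at h
  have hapos : 0 < a := lt_of_le_of_ne ha.1 (Ne.symm h.1)
  have hxpos : 0 < x := lt_of_le_of_ne hx0 (Ne.symm h.2)
  have hLa : 0 ≤ -Real.log a := neglog_nonneg ha.1 ha.2
  have hLx : 0 ≤ -Real.log x := neglog_nonneg hx0 hx1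
  unfold maxSol at hle
  split_ifs at hle with hba hbz
  · linarith
  · have hbpos : 0 < b := lt_of_le_of_ne hb.1 (Ne.symm hbz)
    have hLb : 0 ≤ -Real.log b := neglog_nonneg hbpos.le hb.2
    have hD : 0 ≤ (-Real.log b) ^ lam - (-Real.log a) ^ lam :=
      D_nonneg hlam hbpos hba.le ha.2
    have h1 : ((-Real.log b) ^ lam - (-Real.log a) ^ lam) ^ (1/lam) ≤ -Real.log x := by
      have := Real.log_le_log hxpos hle
      rw [Real.log_exp] at this
      linarith
    have h2 : (-Real.log b) ^ lam - (-Real.log a) ^ lam ≤ (-Real.log x) ^ lam := by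
      calc (-Real.log b) ^ lam - (-Real.log a) ^ lam
          = ((((-Real.log b) ^ lam - (-Real.log a) ^ lam)) ^ (1/lam)) ^ lam :=
            (rpow_inv_lam hlam hD).symm
        _ ≤ _ := Real.rpow_le_rpow (Real.rpow_nonneg hD _) h1 hlam.le
    have h3 : -Real.log b ≤ ((-Real.log a) ^ lam + (-Real.log x) ^ lam) ^ (1/lam) := by
      calc -Real.log b = ((-Real.log b) ^ lam) ^ (1/lam) := (rpow_lam_inv hlam hLb).symm
        _ ≤ _ := Real.rpow_le_rpow (Real.rpow_nonneg hLb _) (by linarith)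
          (one_div_nonneg.2 hlam.le)
    calc Real.exp (-(((-Real.log a) ^ lam + (-Real.log x) ^ lam) ^ (1/lam)))
        ≤ Real.exp (Real.log b) := Real.exp_le_exp.2 (by linarith)
      _ = b := Real.exp_log hbpos
  · have h1 : (-Real.log a) ^ lam ≤ (-Real.log a) ^ lam + (-Real.log x) ^ lam :=
      le_add_of_nonneg_right (Real.rpow_nonneg hLx lam)
    have h2 : -Real.log a ≤ ((-Real.log a) ^ lam + (-Real.log x) ^ lam) ^ (1/lam) := by
      calc -Real.log a = ((-Real.log a) ^ lam) ^ (1/lam) := (rpow_lam_inv hlam hLa).symm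
        _ ≤ _ := Real.rpow_le_rpow (Real.rpow_nonneg hLa _) h1 (one_div_nonneg.2 hlam.le)
    have hab : a ≤ b := not_lt.mp hba
    calc Real.exp (-(((-Real.log a) ^ lam + (-Real.log x) ^ lam) ^ (1/lam)))
        ≤ Real.exp (Real.log a) := Real.exp_le_exp.2 (by linarith)
      _ = a := Real.exp_log hapos
      _ ≤ b := hab

private lemma Xmin_nonneg {m n : ℕ} (lam : ℝ) (A : Fin m → Fin n → ℝ) (b : Fin m → ℝ)
    (e : Fin m → Fin n) (j : Fin n) : 0 ≤ Xmin lam A b e j := by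
  unfold Xmin
  split_ifs with h
  · obtain ⟨i, hi⟩ := h
    exact le_trans (minVal_nonneg lam (b i) (A i j))
      (Finset.le_sup' (fun i => minVal lam (b i) (A i j)) hi)
  · exact le_refl 0

theorem structure_theorem (lam : ℝ) (hlam : 0 < lam) (m n : ℕ) (hm : 0 < m) (hn : 0 < n)
    (A : Fin m → Fin n → ℝ) (hA : ∀ i j, A i j ∈ Set.Icc (0:ℝ) 1)
    (b : Fin m → ℝ) (hb : ∀ i, b i ∈ Set.Icc (0:ℝ) 1)
    (Xbar : Fin n → ℝ)
    (hXbar : Xbar = fun j => Finset.univ.inf' ⟨⟨0, hm⟩, Finset.mem_univ _⟩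
      (fun i => maxSol lam (b i) (A i j))) :
    {x : Fin n → ℝ | (∀ j, x j ∈ Set.Icc (0:ℝ) 1) ∧
        ∀ i, Finset.univ.sup' ⟨⟨0, hn⟩, Finset.mem_univ _⟩
          (fun j => aczelAlsinaStar lam (A i j) (x j)) = b i} =
      ⋃ e ∈ {e : Fin m → Fin n | ∀ i, b i ≤ A i (e i)},
        {x : Fin n → ℝ | ∀ j, Xmin lam A b e j ≤ x j ∧ x j ≤ Xbar j} := by
  ext x
  simp only [Set.mem_setOf_eq, Set.mem_iUnion, exists_prop]
  constructor
  · rintro ⟨hx01, hsup⟩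
    have hchoice : ∀ i, ∃ j, aczelAlsinaStar lam (A i j) (x j) = b i := by
      intro i
      obtain ⟨j, -, hj⟩ := Finset.exists_mem_eq_sup'
        (⟨⟨0, hn⟩, Finset.mem_univ _⟩ : (Finset.univ : Finset (Fin n)).Nonempty)
        (fun j => aczelAlsinaStar lam (A i j) (x j))
      exact ⟨j, by rw [← hj]; exact hsup i⟩
    choose e he using hchoice
    refine ⟨e, fun i => ?_, fun j => ⟨?_, ?_⟩⟩
    · rw [← he i]
      exact aa_le_left hlam (hA i (e i)) (hx01 (e i))
    · unfold Xmin
      split_ifs with hne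
      · apply Finset.sup'_le
        intro i hi
        rw [Finset.mem_filter] at hi
        have heq := he i
        rw [hi.2] at heq
        exact minVal_le_of_aa_eq hlam (hA i j).2 (hA i j).1 (hx01 j).1 (hx01 j).2
          (hb i).1 heq
      · exact (hx01 j).1
    · rw [hXbar]
      apply Finset.le_inf'
      intro i _
      apply le_maxSol_of_aa_le hlam (hA i j) (hb i) (hx01 j).1 (hx01 j).2
      rw [← hsup i]
      exact Finset.le_sup' (fun j => aczelAlsinaStar lam (A i j) (x j)) (Finset.mem_univ j)
  · rintro ⟨e, he, hx⟩
    have hx0 : ∀ j, 0 ≤ x j := fun j =>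
      le_trans (Xmin_nonneg lam A b e j) (hx j).1
    have hx1 : ∀ j, x j ≤ 1 := by
      intro j
      refine le_trans (hx j).2 ?_
      rw [hXbar]
      refine le_trans (Finset.inf'_le _ (Finset.mem_univ ⟨0, hm⟩)) ?_
      exact maxSol_le_one hlam (hb _).1 (hb _).2 (hA _ j).2
    refine ⟨fun j => ⟨hx0 j, hx1 j⟩, fun i => ?_⟩
    apply le_antisymm
    · apply Finset.sup'_le
      intro j _
      apply aa_le_of_le_maxSol hlam (hA i j) (hb i) (hx0 j) (hx1 j)
      refine le_trans (hx j).2 ?_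
      rw [hXbar]
      exact Finset.inf'_le _ (Finset.mem_univ i)
    · refine le_trans ?_
        (Finset.le_sup' (fun j => aczelAlsinaStar lam (A i j) (x j)) (Finset.mem_univ (e i)))
      apply le_aa_of_minVal_le hlam (hb i).1 (he i) (hA i (e i)).2 (hx1 (e i)) (hx0 (e i))
      refine le_trans ?_ (hx (e i)).1
      unfold Xmin
      have hmem : i ∈ Finset.univ.filter (fun i' => e i' = e i) :=
        Finset.mem_filter.2 ⟨Finset.mem_univ i, rfl⟩
      rw [dif_pos ⟨i, hmem⟩]
      exact Finset.le_sup' (fun i' => minVal lam (b i') (A i' (e i))) hmem
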